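/- arXiv:2512.07147 — 2 statements merged into one kernel-verified Lean document; each statement's English description precedes it below -/
import Mathlib

section
/- There is an absolute constant C such that for every j ∈ ℕ, every real C₀ ≥ 0, and every finite set S ⊂ ℝ² with |S| ≤ 2^j, the set E := {ξ ∈ S : there exist two distinct affine lines ℓ₁, ℓ₂ ⊂ ℝ² through ξ with |ℓ₁ ∩ S| ≥ 2^{j/2 + C₀} and |ℓ₂ ∩ S| ≥ 2^{j/2 + C₀}} satisfies |E| ≤ C · 2^{j − 2C₀}. -/
/-!
Two distinct lines meet in at most one point, so every point of `E` is the intersection of two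
of the `t` rich lines (lines carrying at least `N = 2^{j/2+C₀}` points of `S`), and `|E| ≤ t²`.
Double counting incidences between `S` and `k` rich lines gives `k N ≤ |S| + k²`, hence
`k N ≤ 2 |S|` whenever `k ≤ N/2`. If `N² ≥ 16 |S|`, the choice `k = ⌊N/2⌋` then shows that there
are at most `N/2` rich lines, so `t N ≤ 2 |S|` and `|E| ≤ 4 |S|² / N² ≤ 4 ⬝ 2^{j - 2C₀}`.
When `C₀ ≤ 2` the trivial bound `|E| ≤ |S|` is enough.
-/

noncomputable section

/-- A subset of `ℝ²` is an affine line if it is a one-dimensional affine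
subspace, i.e. of the form `{p + t • v : t ∈ ℝ}` with `v ≠ 0`. -/
def IsLine (L : Set (ℝ × ℝ)) : Prop :=
  ∃ p v : ℝ × ℝ, v ≠ 0 ∧ L = {x | ∃ t : ℝ, x = p + t • v}

open Finset

section Incidences

variable {α : Type*}

theorem card_mul_le_card_add_sq {S : Finset α} {F : Finset (Set α)} {m : ℕ}
    (hF : (F : Set (Set α)).Pairwise fun L L' => (L ∩ L').Subsingleton)
    (hm : ∀ L ∈ F, m ≤ (L ∩ ↑S).ncard) :
    #F * m ≤ #S + #F ^ 2 := by
  classical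
  have hrich : ∀ L ∈ F, m ≤ #{x ∈ S | x ∈ L} := by
    intro L hL
    rw [← Set.ncard_coe_finset, coe_filter]
    convert hm L hL using 2
    ext
    simp [and_comm]
  have hdeg : ∀ x ∈ S, #{L ∈ F | x ∈ L} ≤ 1 + #{p ∈ F.offDiag | x ∈ p.1 ∧ x ∈ p.2} := by
    intro x _
    have hpairs : {p ∈ F.offDiag | x ∈ p.1 ∧ x ∈ p.2} = {L ∈ F | x ∈ L}.offDiag := by
      ext p
      simp only [mem_filter, mem_offDiag]
      tauto
    rw [hpairs, offDiag_card]
    rcases #{L ∈ F | x ∈ L} with _ | d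
    · simp
    · rw [show (d + 1) * (d + 1) = d * d + 2 * d + 1 by ring]
      omega
  have hpair : ∀ p ∈ F.offDiag, #{x ∈ S | x ∈ p.1 ∧ x ∈ p.2} ≤ 1 := by
    intro p hp
    obtain ⟨h₁, h₂, hne⟩ := mem_offDiag.1 hp
    refine card_le_one.2 fun x hx y hy => ?_
    rw [mem_filter] at hx hy
    exact hF h₁ h₂ hne hx.2 hy.2
  calc #F * m = #F • m := rfl
    _ ≤ ∑ L ∈ F, #{x ∈ S | x ∈ L} := card_nsmul_le_sum _ _ _ hrich
    _ = ∑ x ∈ S, #{L ∈ F | x ∈ L} :=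
        (sum_card_bipartiteAbove_eq_sum_card_bipartiteBelow (· ∈ ·)).symm
    _ ≤ ∑ x ∈ S, (1 + #{p ∈ F.offDiag | x ∈ p.1 ∧ x ∈ p.2}) := sum_le_sum hdeg
    _ = #S + ∑ p ∈ F.offDiag, #{x ∈ S | x ∈ p.1 ∧ x ∈ p.2} := by
        rw [sum_add_distrib, sum_const, smul_eq_mul, mul_one]
        exact congrArg _ (sum_card_bipartiteAbove_eq_sum_card_bipartiteBelow _)
    _ ≤ #S + ∑ _p ∈ F.offDiag, 1 := by gcongr with p hp; exact hpair p hp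
    _ ≤ #S + #F ^ 2 := by
        rw [sum_const, smul_eq_mul, mul_one, offDiag_card, sq]
        omega

theorem card_rich_mul_le_two_mul {S : Finset α} {T : Finset (Set α)} {n N : ℝ}
    (hT : (T : Set (Set α)).Pairwise fun L L' => (L ∩ L').Subsingleton)
    (hrich : ∀ L ∈ T, N ≤ (L ∩ ↑S).ncard) (hSn : #S ≤ n) (hN : 4 ≤ N)
    (hNn : 16 * n ≤ N ^ 2) :
    #T * N ≤ 2 * n := by
  have hsub : ∀ F ⊆ T, (#F : ℝ) * N ≤ n + #F ^ 2 := by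
    intro F hF
    have hcount := card_mul_le_card_add_sq (hT.mono (coe_subset.2 hF)) (m := ⌈N⌉₊)
      fun L hL => Nat.ceil_le.2 (hrich L (hF hL))
    have hceil : N ≤ ⌈N⌉₊ := Nat.le_ceil N
    have hcountR : (#F : ℝ) * ⌈N⌉₊ ≤ #S + #F ^ 2 := by exact_mod_cast hcount
    nlinarith [(#F).cast_nonneg (α := ℝ)]
  have hsmall : ∀ F ⊆ T, (#F : ℝ) ≤ N / 2 → #F * N ≤ 2 * n := by
    intro F hF hFN
    nlinarith [hsub F hF, (#F).cast_nonneg (α := ℝ)]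
  by_cases hTN : (#T : ℝ) ≤ N / 2
  · exact hsmall T subset_rfl hTN
  · exfalso
    have hfloor : (⌊N / 2⌋₊ : ℝ) ≤ N / 2 := Nat.floor_le (by linarith)
    have hk : ⌊N / 2⌋₊ ≤ #T := by exact_mod_cast hfloor.trans (not_le.1 hTN).le
    obtain ⟨F, hFT, hF⟩ := exists_subset_card_eq hk
    have hkN := hsmall F hFT (hF ▸ hfloor)
    rw [hF] at hkN
    nlinarith [Nat.sub_one_lt_floor (N / 2)]

theorem ncard_le_card_sq_of_forall_mem_two {E : Set α} {T : Finset (Set α)}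
    (hT : (T : Set (Set α)).Pairwise fun L L' => (L ∩ L').Subsingleton)
    (hE : ∀ ξ ∈ E, ∃ L₁ ∈ T, ∃ L₂ ∈ T, L₁ ≠ L₂ ∧ ξ ∈ L₁ ∧ ξ ∈ L₂) :
    E.ncard ≤ #T ^ 2 := by
  classical
  have hcover : E ⊆ ⋃ p ∈ T.offDiag, p.1 ∩ p.2 := by
    intro ξ hξ
    obtain ⟨L₁, h₁, L₂, h₂, hne, hξ₁, hξ₂⟩ := hE ξ hξ
    exact Set.mem_biUnion (x := (L₁, L₂)) (mem_offDiag.2 ⟨h₁, h₂, hne⟩) ⟨hξ₁, hξ₂⟩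
  have hsingle : ∀ p ∈ T.offDiag, (p.1 ∩ p.2).Subsingleton := fun p hp =>
    hT (mem_offDiag.1 hp).1 (mem_offDiag.1 hp).2.1 (mem_offDiag.1 hp).2.2
  have hfin : (⋃ p ∈ T.offDiag, p.1 ∩ p.2).Finite :=
    T.offDiag.finite_toSet.biUnion fun p hp => (hsingle p hp).finite
  calc E.ncard ≤ (⋃ p ∈ T.offDiag, p.1 ∩ p.2).ncard := Set.ncard_le_ncard hcover hfin
    _ ≤ ∑ p ∈ T.offDiag, (p.1 ∩ p.2).ncard := T.offDiag.set_ncard_biUnion_le _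
    _ ≤ ∑ _p ∈ T.offDiag, 1 := by
        gcongr with p hp
        exact (Set.ncard_le_one (hsingle p hp).finite).2 (hsingle p hp)
    _ ≤ #T ^ 2 := by
        rw [sum_const, smul_eq_mul, mul_one, offDiag_card, sq]
        omega

end Incidences

def lineThrough (x y : ℝ × ℝ) : Set (ℝ × ℝ) := {z | ∃ t : ℝ, z = x + t • (y - x)}

theorem IsLine.eq_lineThrough {L : Set (ℝ × ℝ)} {x y : ℝ × ℝ}
    (hL : IsLine L) (hx : x ∈ L) (hy : y ∈ L) (hxy : x ≠ y) : L = lineThrough x y := by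
  obtain ⟨p, v, -, rfl⟩ := hL
  obtain ⟨a, rfl⟩ := hx
  obtain ⟨b, rfl⟩ := hy
  have hab : b - a ≠ 0 := sub_ne_zero.2 fun h => hxy (h ▸ rfl)
  have hyx : (p + b • v) - (p + a • v) = (b - a) • v := by
    rw [sub_smul]; abel
  ext z
  constructor
  · rintro ⟨t, rfl⟩
    refine ⟨(t - a) / (b - a), ?_⟩
    rw [hyx, smul_smul, div_mul_cancel₀ _ hab, sub_smul]
    abel
  · rintro ⟨s, rfl⟩
    refine ⟨a + s * (b - a), ?_⟩
    rw [hyx, smul_smul, add_smul]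
    abel

theorem IsLine.inter_subsingleton {L₁ L₂ : Set (ℝ × ℝ)} (h₁ : IsLine L₁) (h₂ : IsLine L₂)
    (hne : L₁ ≠ L₂) : (L₁ ∩ L₂).Subsingleton := by
  rintro x ⟨hx₁, hx₂⟩ y ⟨hy₁, hy₂⟩
  by_contra hxy
  exact hne ((h₁.eq_lineThrough hx₁ hy₁ hxy).trans (h₂.eq_lineThrough hx₂ hy₂ hxy).symm)

theorem finite_setOf_isLine_one_lt_ncard {S : Set (ℝ × ℝ)} (hS : S.Finite) :
    {L | IsLine L ∧ 1 < (L ∩ S).ncard}.Finite := by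
  refine ((hS.prod hS).image fun p => lineThrough p.1 p.2).subset ?_
  rintro L ⟨hL, hLS⟩
  obtain ⟨x, y, hx, hy, hxy⟩ := (Set.one_lt_ncard_iff (hS.inter_of_right L)).1 hLS
  exact ⟨(x, y), ⟨hx.2, hy.2⟩, (hL.eq_lineThrough hx.1 hy.1 hxy).symm⟩

theorem ncard_mem_two_rich_lines_mul_sq_le {S : Set (ℝ × ℝ)} (hS : S.Finite) {n N : ℝ}
    (hSn : S.ncard ≤ n) (hN : 4 ≤ N) (hNn : 16 * n ≤ N ^ 2) :
    (({ξ ∈ S | ∃ L₁ L₂ : Set (ℝ × ℝ), IsLine L₁ ∧ IsLine L₂ ∧ L₁ ≠ L₂ ∧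
        ξ ∈ L₁ ∧ ξ ∈ L₂ ∧ N ≤ ((L₁ ∩ S).ncard : ℝ) ∧ N ≤ ((L₂ ∩ S).ncard : ℝ)}).ncard : ℝ) *
      N ^ 2 ≤ 4 * n ^ 2 := by
  obtain ⟨S, rfl⟩ := hS.exists_finset_coe
  have hfin : {L | IsLine L ∧ N ≤ ((L ∩ ↑S).ncard : ℝ)}.Finite :=
    (finite_setOf_isLine_one_lt_ncard S.finite_toSet).subset fun L hL =>
      ⟨hL.1, by exact_mod_cast (by linarith [hL.2] : (1 : ℝ) < (L ∩ ↑S).ncard)⟩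
  set T := hfin.toFinset
  have hT : (T : Set (Set (ℝ × ℝ))).Pairwise fun L L' => (L ∩ L').Subsingleton := by
    rw [hfin.coe_toFinset]
    exact fun L₁ h₁ L₂ h₂ hne => h₁.1.inter_subsingleton h₂.1 hne
  have hTN : #T * N ≤ 2 * n :=
    card_rich_mul_le_two_mul hT (fun L hL => (hfin.mem_toFinset.1 hL).2)
      (by simpa using hSn) hN hNn
  calc _ ≤ (#T : ℝ) ^ 2 * N ^ 2 := by
        gcongr
        norm_cast
        refine ncard_le_card_sq_of_forall_mem_two hT ?_
        rintro ξ ⟨-, L₁, L₂, h₁, h₂, hne, hξ₁, hξ₂, hr₁, hr₂⟩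
        exact ⟨L₁, hfin.mem_toFinset.2 ⟨h₁, hr₁⟩, L₂, hfin.mem_toFinset.2 ⟨h₂, hr₂⟩, hne, hξ₁, hξ₂⟩
    _ = (#T * N) ^ 2 := by ring
    _ ≤ (2 * n) ^ 2 := by gcongr
    _ = 4 * n ^ 2 := by ring

/-- There is an absolute constant `C` such that for every
`j ∈ ℕ`, `C₀ ≥ 0` and finite `S ⊆ ℝ²` with `|S| ≤ 2^j`, the set `E` of points
of `S` lying on two distinct lines each meeting `S` in at least `2^{j/2+C₀}`
points satisfies `|E| ≤ C ⬝ 2^{j - 2C₀}`. -/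
theorem stmt4 :
    ∃ C : ℝ, 0 < C ∧
      ∀ (j : ℕ) (C₀ : ℝ), 0 ≤ C₀ →
      ∀ S : Set (ℝ × ℝ), S.Finite → S.ncard ≤ 2 ^ j →
      (({ξ ∈ S | ∃ L₁ L₂ : Set (ℝ × ℝ), IsLine L₁ ∧ IsLine L₂ ∧ L₁ ≠ L₂ ∧
            ξ ∈ L₁ ∧ ξ ∈ L₂ ∧
            (2 : ℝ) ^ ((j : ℝ) / 2 + C₀) ≤ ((L₁ ∩ S).ncard : ℝ) ∧
            (2 : ℝ) ^ ((j : ℝ) / 2 + C₀) ≤ ((L₂ ∩ S).ncard : ℝ)}).ncard : ℝ)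
        ≤ C * (2 : ℝ) ^ ((j : ℝ) - 2 * C₀) := by
  refine ⟨16, by norm_num, fun j C₀ _ S hS hSj => ?_⟩
  set a := (2 : ℝ) ^ ((j : ℝ) - 2 * C₀)
  set b := (2 : ℝ) ^ (2 * C₀)
  set N := (2 : ℝ) ^ ((j : ℝ) / 2 + C₀)
  have ha : 0 < a := by positivity
  have hab : (2 : ℝ) ^ j = a * b := by
    rw [← Real.rpow_natCast, ← Real.rpow_add two_pos]; ring_nf
  have hN : N ^ 2 = a * b ^ 2 := by
    rw [← Real.rpow_mul_natCast zero_le_two, sq, ← Real.rpow_add two_pos,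
      ← Real.rpow_add two_pos]; ring_nf
  have hSn : (S.ncard : ℝ) ≤ a * b := by rw [← hab]; exact_mod_cast hSj
  rcases le_or_gt b 16 with hb | hb
  · calc _ ≤ (S.ncard : ℝ) := by exact_mod_cast Set.ncard_le_ncard (Set.sep_subset S _) hS
      _ ≤ 16 * a := by nlinarith
  · have h2j : (1 : ℝ) ≤ a * b := hab ▸ one_le_pow₀ one_le_two
    have hN4 : 4 ≤ N := by nlinarith [show 0 < N by positivity]
    have hmain := ncard_mem_two_rich_lines_mul_sq_le hS hSn hN4 (by nlinarith)
    rw [hN] at hmain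
    have hab2 : 0 < a * b ^ 2 := by positivity
    nlinarith

end
end

section
/- Let ε ∈ (0,1), K > 0, let W : [0,1] → ℝ be measurable and (1−ε, 1/2)-irregular with constant K, let T₀ ∈ (0,1], and let h : ℤ² → [0,∞) be finitely supported. Then ∫_0^{T₀} ∫_{𝕋²} |Σ_{k∈ℤ²} h(k) e^{−i W_t |k|²} e^{i k·x}|⁴ dμ(x) dt ≤ T₀ · Σ_{Q∈𝒬⁰} h(Q) + K √T₀ · Σ_{τ∈ℤ, τ≠0} (1+|τ|)^{−(1−ε)} Σ_{Q∈𝒬^τ} h(Q). -/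
open MeasureTheory Complex

noncomputable section

/-- The character `x ↦ e^{i k·x}` on the torus `(ℝ/2πℤ)²`, viewed as a
`2π`-periodic function on `ℝ × ℝ`. -/
def torusChar2 (k : ℤ × ℤ) (x : ℝ × ℝ) : ℂ :=
  Complex.exp (Complex.I * ((k.1 : ℂ) * (x.1 : ℂ) + (k.2 : ℂ) * (x.2 : ℂ)))

/-- Integral over the torus `𝕋² = (ℝ/2πℤ)²` with respect to the normalized Haar
probability measure, computed on the fundamental domain `[0,2π]²`. -/
def torusIntegral2 (F : ℝ × ℝ → ℝ) : ℝ :=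
  (1 / (2 * Real.pi) ^ 2) *
    ∫ x in Set.Icc (0 : ℝ) (2 * Real.pi) ×ˢ Set.Icc (0 : ℝ) (2 * Real.pi), F x

/-- `|k|² = k₁² + k₂²` for `k ∈ ℤ²`. -/
def normSq2 (k : ℤ × ℤ) : ℤ := k.1 ^ 2 + k.2 ^ 2

/-- Quadruples `Q = (k₁,k₂,k₃,k₄)` of points of `ℤ²`. -/
abbrev Quad := (ℤ × ℤ) × (ℤ × ℤ) × (ℤ × ℤ) × (ℤ × ℤ)

/-- Membership in `𝒬`: `k₁ - k₂ + k₃ - k₄ = 0`. -/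
def isParallelogram (Q : Quad) : Prop := Q.1 - Q.2.1 + Q.2.2.1 - Q.2.2.2 = 0

instance : DecidablePred isParallelogram := fun Q => by
  unfold isParallelogram; infer_instance

/-- `τ_Q = |k₁|² - |k₂|² + |k₃|² - |k₄|²`. -/
def tauQ (Q : Quad) : ℤ :=
  normSq2 Q.1 - normSq2 Q.2.1 + normSq2 Q.2.2.1 - normSq2 Q.2.2.2

/-- `h(Q) = h(k₁) h(k₂) h(k₃) h(k₄)` for real-valued `h`. -/
def hQuadR (h : ℤ × ℤ → ℝ) (Q : Quad) : ℝ :=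
  h Q.1 * h Q.2.1 * h Q.2.2.1 * h Q.2.2.2

/-- `W : [0,1] → ℝ` is `(ρ,γ)`-irregular with constant `K`. -/
def Irregular (W : ℝ → ℝ) (ρ γ K : ℝ) : Prop :=
  ∀ s t : ℝ, 0 ≤ s → s < t → t ≤ 1 → ∀ τ : ℝ,
    ‖∫ u in s..t, Complex.exp (Complex.I * (W u : ℂ) * (τ : ℂ))‖ ≤
      K * (1 + |τ|) ^ (-ρ) * (t - s) ^ γ

/-! Expanding `|f|⁴ = f f̄ f f̄` and integrating over the torus keeps exactly the quadruples
with `k₁ - k₂ + k₃ - k₄ = 0`, each contributing `h(Q) cos(W_t τ_Q)`. In time, the resonant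
quadruples (`τ_Q = 0`) contribute `T₀ h(Q)`; for the others, `∫₀^{T₀} cos(W_t τ_Q) dt` is the
real part of the oscillatory integral that the irregularity of `W` controls. -/

open Finset

lemma continuous_torusChar2 (k : ℤ × ℤ) : Continuous (torusChar2 k) := by
  unfold torusChar2; fun_prop

lemma torusChar2_add (k l : ℤ × ℤ) (x : ℝ × ℝ) :
    torusChar2 (k + l) x = torusChar2 k x * torusChar2 l x := by
  simp only [torusChar2, ← Complex.exp_add, Prod.fst_add, Prod.snd_add]
  push_cast
  ring_nf

lemma conj_torusChar2 (k : ℤ × ℤ) (x : ℝ × ℝ) :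
    starRingEnd ℂ (torusChar2 k x) = torusChar2 (-k) x := by
  simp only [torusChar2, ← Complex.exp_conj, map_mul, map_add, Complex.conj_I,
    Complex.conj_ofReal, map_intCast, Prod.fst_neg, Prod.snd_neg]
  push_cast
  ring_nf

lemma torusChar2_eq_mul (k : ℤ × ℤ) (x : ℝ × ℝ) :
    torusChar2 k x = exp (I * k.1 * x.1) * exp (I * k.2 * x.2) := by
  rw [torusChar2, ← Complex.exp_add]
  ring_nf

lemma setIntegral_Icc_exp_int_mul_I (m : ℤ) :
    ∫ x in Set.Icc (0 : ℝ) (2 * Real.pi), exp (I * m * x) =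
      if m = 0 then ((2 * Real.pi : ℝ) : ℂ) else 0 := by
  rw [integral_Icc_eq_integral_Ioc, ← intervalIntegral.integral_of_le (by positivity)]
  split_ifs with hm
  · simp [hm]
  · rw [integral_exp_mul_complex (mul_ne_zero I_ne_zero (Int.cast_ne_zero.2 hm))]
    have h2π : I * m * ((2 * Real.pi : ℝ) : ℂ) = m * (2 * Real.pi * I) := by
      push_cast; ring
    rw [h2π, exp_int_mul_two_pi_mul_I, ofReal_zero, mul_zero, exp_zero, sub_self, zero_div]

lemma setIntegral_torusChar2 (m : ℤ × ℤ) :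
    ∫ x in Set.Icc (0 : ℝ) (2 * Real.pi) ×ˢ Set.Icc (0 : ℝ) (2 * Real.pi), torusChar2 m x =
      if m = 0 then (((2 * Real.pi) ^ 2 : ℝ) : ℂ) else 0 := by
  simp_rw [torusChar2_eq_mul]
  rw [Measure.volume_eq_prod, setIntegral_prod_mul (fun x : ℝ => exp (I * m.1 * x))
    (fun y : ℝ => exp (I * m.2 * y)), setIntegral_Icc_exp_int_mul_I,
    setIntegral_Icc_exp_int_mul_I]
  obtain ⟨m₁, m₂⟩ := m
  by_cases h₁ : m₁ = 0 <;> by_cases h₂ : m₂ = 0 <;> simp [h₁, h₂, sq]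

lemma torusIntegral2_re_mul_torusChar2 (α : ℂ) (m : ℤ × ℤ) :
    torusIntegral2 (fun x => (α * torusChar2 m x).re) = if m = 0 then α.re else 0 := by
  have hint : Integrable (fun x => α * torusChar2 m x)
      (volume.restrict (Set.Icc (0 : ℝ) (2 * Real.pi) ×ˢ Set.Icc (0 : ℝ) (2 * Real.pi))) :=
    (continuous_const.mul (continuous_torusChar2 m)).continuousOn.integrableOn_compact
      (isCompact_Icc.prod isCompact_Icc)
  have hre := integral_re hint
  simp only [RCLike.re_to_complex] at hre
  rw [torusIntegral2, hre, integral_const_mul, setIntegral_torusChar2]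
  split_ifs
  · rw [mul_comm α, re_ofReal_mul]
    field_simp
  · simp

lemma torusIntegral2_sum {ι : Type*} (s : Finset ι) (F : ι → ℝ × ℝ → ℝ)
    (hF : ∀ i ∈ s, Continuous (F i)) :
    torusIntegral2 (fun x => ∑ i ∈ s, F i x) = ∑ i ∈ s, torusIntegral2 (F i) := by
  rw [torusIntegral2, integral_finsetSum, mul_sum]
  · rfl
  exact fun i hi => (hF i hi).continuousOn.integrableOn_compact (isCompact_Icc.prod isCompact_Icc)

lemma norm_pow_four_eq_re (z : ℂ) :
    ‖z‖ ^ 4 = (z * starRingEnd ℂ z * z * starRingEnd ℂ z).re := by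
  rw [mul_assoc _ z, mul_conj, ← ofReal_mul, ofReal_re, normSq_eq_norm_sq]
  ring

lemma sum_mul_sum_mul_sum_mul_sum {ι₁ ι₂ ι₃ ι₄ R : Type*} [CommSemiring R]
    (s₁ : Finset ι₁) (s₂ : Finset ι₂) (s₃ : Finset ι₃) (s₄ : Finset ι₄)
    (f₁ : ι₁ → R) (f₂ : ι₂ → R) (f₃ : ι₃ → R) (f₄ : ι₄ → R) :
    (∑ a ∈ s₁, f₁ a) * (∑ b ∈ s₂, f₂ b) * (∑ c ∈ s₃, f₃ c) * (∑ d ∈ s₄, f₄ d) =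
      ∑ Q ∈ s₁ ×ˢ s₂ ×ˢ s₃ ×ˢ s₄, f₁ Q.1 * f₂ Q.2.1 * f₃ Q.2.2.1 * f₄ Q.2.2.2 := by
  rw [mul_assoc, mul_assoc]
  simp only [sum_mul]
  simp only [mul_sum, sum_product, mul_assoc]

def quadCoeff (c : ℤ × ℤ → ℂ) (Q : Quad) : ℂ :=
  c Q.1 * starRingEnd ℂ (c Q.2.1) * c Q.2.2.1 * starRingEnd ℂ (c Q.2.2.2)

lemma norm_sum_torusChar2_pow_four (c : ℤ × ℤ → ℂ) (A : Finset (ℤ × ℤ)) (x : ℝ × ℝ) :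
    ‖∑ k ∈ A, c k * torusChar2 k x‖ ^ 4 =
      ∑ Q ∈ A ×ˢ A ×ˢ A ×ˢ A,
        (quadCoeff c Q * torusChar2 (Q.1 - Q.2.1 + Q.2.2.1 - Q.2.2.2) x).re := by
  rw [norm_pow_four_eq_re, map_sum, sum_mul_sum_mul_sum_mul_sum, ← re_sum]
  congr 1
  refine sum_congr rfl fun Q _ => ?_
  simp only [quadCoeff, map_mul, conj_torusChar2, sub_eq_add_neg, torusChar2_add]
  ring

lemma torusIntegral2_norm_sum_torusChar2_pow_four (c : ℤ × ℤ → ℂ) (A : Finset (ℤ × ℤ)) :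
    torusIntegral2 (fun x => ‖∑ k ∈ A, c k * torusChar2 k x‖ ^ 4) =
      ∑ Q ∈ A ×ˢ A ×ˢ A ×ˢ A with isParallelogram Q, (quadCoeff c Q).re := by
  simp_rw [norm_sum_torusChar2_pow_four]
  rw [torusIntegral2_sum _
    (fun Q x => (quadCoeff c Q * torusChar2 (Q.1 - Q.2.1 + Q.2.2.1 - Q.2.2.2) x).re)
    fun Q _ => continuous_re.comp (continuous_const.mul (continuous_torusChar2 _)), sum_filter]
  exact sum_congr rfl fun Q _ => torusIntegral2_re_mul_torusChar2 _ _

lemma re_quadCoeff_modulated (h : ℤ × ℤ → ℝ) (w : ℝ) (Q : Quad) :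
    (quadCoeff (fun k => (h k : ℂ) * exp (-I * w * normSq2 k)) Q).re =
      hQuadR h Q * Real.cos (w * tauQ Q) := by
  have hconj : ∀ k, starRingEnd ℂ ((h k : ℂ) * exp (-I * w * normSq2 k)) =
      h k * exp (I * w * normSq2 k) := by
    intro k
    rw [map_mul, conj_ofReal, ← exp_conj]
    simp
  obtain ⟨k₁, k₂, k₃, k₄⟩ := Q
  simp only [quadCoeff, hconj]
  have hexp : (h k₁ : ℂ) * exp (-I * w * normSq2 k₁) * (h k₂ * exp (I * w * normSq2 k₂)) *
      (h k₃ * exp (-I * w * normSq2 k₃)) * (h k₄ * exp (I * w * normSq2 k₄)) =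
      hQuadR h (k₁, k₂, k₃, k₄) * exp ((-(w * tauQ (k₁, k₂, k₃, k₄)) : ℝ) * I) := by
    simp only [hQuadR, tauQ, mul_mul_mul_comm _ (exp _), ← exp_add]
    push_cast
    ring_nf
  rw [hexp, re_ofReal_mul, exp_ofReal_mul_I_re, Real.cos_neg]

lemma torusIntegral2_modulated_pow_four (h : ℤ × ℤ → ℝ) (A : Finset (ℤ × ℤ)) (w : ℝ) :
    torusIntegral2 (fun x => ‖∑ k ∈ A, (h k : ℂ) * exp (-I * w * normSq2 k) * torusChar2 k x‖ ^ 4) =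
      ∑ Q ∈ A ×ˢ A ×ˢ A ×ˢ A with isParallelogram Q, hQuadR h Q * Real.cos (w * tauQ Q) := by
  rw [torusIntegral2_norm_sum_torusChar2_pow_four (fun k => (h k : ℂ) * exp (-I * w * normSq2 k))]
  simp_rw [re_quadCoeff_modulated]

lemma intervalIntegrable_cos_mul {W : ℝ → ℝ} (hW : Measurable W) (τ a b : ℝ) :
    IntervalIntegrable (fun t => Real.cos (W t * τ)) volume a b :=
  (intervalIntegrable_const (c := (1 : ℝ))).mono_fun'
    (Real.measurable_cos.comp (hW.mul_const τ)).aestronglyMeasurable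
    (ae_of_all _ fun _ => Real.abs_cos_le_one _)

lemma Irregular.integral_cos_le {W : ℝ → ℝ} {ρ γ K : ℝ} (hirr : Irregular W ρ γ K)
    (hW : Measurable W) {T : ℝ} (hT : T ∈ Set.Ioc 0 1) (τ : ℝ) :
    ∫ t in 0..T, Real.cos (W t * τ) ≤ K * (1 + |τ|) ^ (-ρ) * T ^ γ := by
  have hexp : IntervalIntegrable (fun t => exp (I * W t * τ)) volume 0 T :=
    (intervalIntegrable_const (c := (1 : ℝ))).mono_fun'
      (by fun_prop : Measurable fun t => exp (I * W t * τ)).aestronglyMeasurable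
      (ae_of_all _ fun _ => by simp [norm_exp])
  calc ∫ t in 0..T, Real.cos (W t * τ)
      = (∫ t in 0..T, exp (I * W t * τ)).re := by
        rw [← RCLike.re_to_complex, ← intervalIntegral.intervalIntegral_re hexp]
        refine intervalIntegral.integral_congr fun t _ => ?_
        rw [RCLike.re_to_complex, show I * W t * τ = ((W t * τ : ℝ) : ℂ) * I by push_cast; ring,
          exp_ofReal_mul_I_re]
    _ ≤ ‖∫ t in 0..T, exp (I * W t * τ)‖ := re_le_norm _
    _ ≤ K * (1 + |τ|) ^ (-ρ) * (T - 0) ^ γ := hirr 0 T le_rfl hT.1 hT.2 τ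
    _ = K * (1 + |τ|) ^ (-ρ) * T ^ γ := by rw [sub_zero]

lemma hQuadR_nonneg {h : ℤ × ℤ → ℝ} (hpos : ∀ k, 0 ≤ h k) (Q : Quad) : 0 ≤ hQuadR h Q :=
  mul_nonneg (mul_nonneg (mul_nonneg (hpos _) (hpos _)) (hpos _)) (hpos _)

theorem stmt12_general (ε K : ℝ)
    (W : ℝ → ℝ) (hW : Measurable W) (hirr : Irregular W (1 - ε) (1 / 2) K)
    (T₀ : ℝ) (hT₀ : T₀ ∈ Set.Ioc (0 : ℝ) 1)
    (h : ℤ × ℤ → ℝ) (hpos : ∀ k, 0 ≤ h k)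
    (A : Finset (ℤ × ℤ)) :
    (∫ t in (0 : ℝ)..T₀, torusIntegral2 fun x =>
        ‖∑ k ∈ A, (h k : ℂ) *
            Complex.exp (-Complex.I * (W t : ℂ) * (normSq2 k : ℂ)) *
            torusChar2 k x‖ ^ 4)
      ≤ T₀ * (∑ Q ∈ (A ×ˢ A ×ˢ A ×ˢ A).filter
            (fun Q => isParallelogram Q ∧ tauQ Q = 0), hQuadR h Q)
        + K * Real.sqrt T₀ * ∑ Q ∈ (A ×ˢ A ×ˢ A ×ˢ A).filter
            (fun Q => isParallelogram Q ∧ tauQ Q ≠ 0),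
            ((1 + |(tauQ Q : ℝ)|) ^ (-(1 - ε)) * hQuadR h Q) := by
  simp_rw [torusIntegral2_modulated_pow_four]
  rw [intervalIntegral.integral_finsetSum fun Q _ =>
      (intervalIntegrable_cos_mul hW _ _ _).const_mul _,
    ← sum_filter_add_sum_filter_not _ (fun Q => tauQ Q = 0), filter_filter, filter_filter,
    mul_sum, mul_sum]
  gcongr with Q hQ Q hQ
  · simp [(mem_filter.1 hQ).2.2]
  · rw [intervalIntegral.integral_const_mul, Real.sqrt_eq_rpow]
    calc hQuadR h Q * ∫ t in 0..T₀, Real.cos (W t * tauQ Q)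
        ≤ hQuadR h Q * (K * (1 + |(tauQ Q : ℝ)|) ^ (-(1 - ε)) * T₀ ^ (1 / 2 : ℝ)) :=
          mul_le_mul_of_nonneg_left (hirr.integral_cos_le hW hT₀ _) (hQuadR_nonneg hpos Q)
      _ = _ := by ring

/-- The basic estimate of the `L⁴` norm of a modulated
trigonometric polynomial with nonnegative coefficients in terms of the counting
quantities `Σ_{Q ∈ 𝒬^τ} h(Q)` and the irregularity of `W`. -/
theorem stmt12 (ε K : ℝ) (hε : ε ∈ Set.Ioo (0 : ℝ) 1) (hK : 0 < K)
    (W : ℝ → ℝ) (hW : Measurable W) (hirr : Irregular W (1 - ε) (1 / 2) K)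
    (T₀ : ℝ) (hT₀ : T₀ ∈ Set.Ioc (0 : ℝ) 1)
    (h : ℤ × ℤ → ℝ) (hpos : ∀ k, 0 ≤ h k)
    (A : Finset (ℤ × ℤ)) (hsupp : ∀ k, h k ≠ 0 → k ∈ A) :
    (∫ t in (0 : ℝ)..T₀, torusIntegral2 fun x =>
        ‖∑ k ∈ A, (h k : ℂ) *
            Complex.exp (-Complex.I * (W t : ℂ) * (normSq2 k : ℂ)) *
            torusChar2 k x‖ ^ 4)
      ≤ T₀ * (∑ Q ∈ (A ×ˢ A ×ˢ A ×ˢ A).filter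
            (fun Q => isParallelogram Q ∧ tauQ Q = 0), hQuadR h Q)
        + K * Real.sqrt T₀ * ∑ Q ∈ (A ×ˢ A ×ˢ A ×ˢ A).filter
            (fun Q => isParallelogram Q ∧ tauQ Q ≠ 0),
            ((1 + |(tauQ Q : ℝ)|) ^ (-(1 - ε)) * hQuadR h Q) :=
  stmt12_general ε K W hW hirr T₀ hT₀ h hpos A

end
end
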